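/- For any set O of objects, each O-equivalence class of formal concepts of a database Db has a greatest element with respect to the order ⪯ (equivalently, a least element for the dual order), where two concepts (X,Y), (X',Y') are O-equivalent iff Y ∩ O = Y' ∩ O. -/

import Mathlib

variable {α β : Type*} [DecidableEq α] [DecidableEq β]

/-- `(X, Y)` is a 1-rectangle of the database with relation `Db`,
attribute set `AA` and object set `OO`: every attribute of `X` is in
relation with every object of `Y`. -/
def IsRect (Db : α → β → Prop) (AA : Finset α) (OO : Finset β)
    (X : Finset α) (Y : Finset β) : Prop :=
  X ⊆ AA ∧ Y ⊆ OO ∧ ∀ a ∈ X, ∀ o ∈ Y, Db a o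

/-- A formal concept is a 1-rectangle that is maximal for componentwise
inclusion of bi-sets. -/
def IsConcept (Db : α → β → Prop) (AA : Finset α) (OO : Finset β)
    (X : Finset α) (Y : Finset β) : Prop :=
  IsRect Db AA OO X Y ∧
    ∀ X' Y', IsRect Db AA OO X' Y' → X ⊆ X' → Y ⊆ Y' → X = X' ∧ Y = Y'

/-!
Write `Y↑ = commonAttrs Y` and `X↓ = commonObjs X`. These form an antitone Galois connection,
and concepts are exactly the pairs with `X = Y↑`, `Y = X↓`. For a concept `(X, Y)` put
`Z = Y ∩ O`; then `(Z↑, Z↑↓)` is a concept with `Z ⊆ Z↑↓ ⊆ Y`, so it lies in the class of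
`(X, Y)`. Any `(X', Y')` in that class has `Z ⊆ Y'`, hence `X' = Y'↑ ⊆ Z↑` and
`Z↑↓ ⊆ X'↓ = Y'`.
-/

section Derivation

omit [DecidableEq α] [DecidableEq β]

variable (Db : α → β → Prop) (AA : Finset α) (OO : Finset β)

open scoped Classical in
noncomputable def commonAttrs (Y : Finset β) : Finset α := {a ∈ AA | ∀ o ∈ Y, Db a o}

open scoped Classical in
noncomputable def commonObjs (X : Finset α) : Finset β := {o ∈ OO | ∀ a ∈ X, Db a o}

variable {Db AA OO}

@[simp]
theorem mem_commonAttrs {Y : Finset β} {a : α} :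
    a ∈ commonAttrs Db AA Y ↔ a ∈ AA ∧ ∀ o ∈ Y, Db a o := by
  simp [commonAttrs]

@[simp]
theorem mem_commonObjs {X : Finset α} {o : β} :
    o ∈ commonObjs Db OO X ↔ o ∈ OO ∧ ∀ a ∈ X, Db a o := by
  simp [commonObjs]

theorem commonAttrs_subset (Y : Finset β) : commonAttrs Db AA Y ⊆ AA := fun _ ha =>
  (mem_commonAttrs.1 ha).1

theorem commonObjs_subset (X : Finset α) : commonObjs Db OO X ⊆ OO := fun _ ho =>
  (mem_commonObjs.1 ho).1

theorem commonAttrs_anti {Y Y' : Finset β} (h : Y ⊆ Y') :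
    commonAttrs Db AA Y' ⊆ commonAttrs Db AA Y := fun a ha => by
  rw [mem_commonAttrs] at ha ⊢
  exact ⟨ha.1, fun o ho => ha.2 o (h ho)⟩

theorem commonObjs_anti {X X' : Finset α} (h : X ⊆ X') :
    commonObjs Db OO X' ⊆ commonObjs Db OO X := fun o ho => by
  rw [mem_commonObjs] at ho ⊢
  exact ⟨ho.1, fun a ha => ho.2 a (h ha)⟩

theorem subset_commonObjs_commonAttrs {Z : Finset β} (hZ : Z ⊆ OO) :
    Z ⊆ commonObjs Db OO (commonAttrs Db AA Z) := fun o ho =>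
  mem_commonObjs.2 ⟨hZ ho, fun _ ha => (mem_commonAttrs.1 ha).2 o ho⟩

theorem subset_commonAttrs_commonObjs {X : Finset α} (hX : X ⊆ AA) :
    X ⊆ commonAttrs Db AA (commonObjs Db OO X) := fun a ha =>
  mem_commonAttrs.2 ⟨hX ha, fun _ ho => (mem_commonObjs.1 ho).2 a ha⟩

theorem IsRect.subset_commonAttrs {X : Finset α} {Y : Finset β} (h : IsRect Db AA OO X Y) :
    X ⊆ commonAttrs Db AA Y := fun a ha =>
  mem_commonAttrs.2 ⟨h.1 ha, h.2.2 a ha⟩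

theorem IsRect.subset_commonObjs {X : Finset α} {Y : Finset β} (h : IsRect Db AA OO X Y) :
    Y ⊆ commonObjs Db OO X := fun o ho =>
  mem_commonObjs.2 ⟨h.2.1 ho, fun a ha => h.2.2 a ha o ho⟩

theorem isRect_commonObjs {X : Finset α} (hX : X ⊆ AA) :
    IsRect Db AA OO X (commonObjs Db OO X) :=
  ⟨hX, commonObjs_subset X, fun _ ha _ ho => (mem_commonObjs.1 ho).2 _ ha⟩

theorem isRect_commonAttrs {Y : Finset β} (hY : Y ⊆ OO) :
    IsRect Db AA OO (commonAttrs Db AA Y) Y :=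
  ⟨commonAttrs_subset Y, hY, fun _ ha => (mem_commonAttrs.1 ha).2⟩

theorem IsConcept.eq_commonAttrs {X : Finset α} {Y : Finset β} (h : IsConcept Db AA OO X Y) :
    X = commonAttrs Db AA Y :=
  (h.2 _ _ (isRect_commonAttrs h.1.2.1) h.1.subset_commonAttrs subset_rfl).1

theorem IsConcept.eq_commonObjs {X : Finset α} {Y : Finset β} (h : IsConcept Db AA OO X Y) :
    Y = commonObjs Db OO X :=
  (h.2 _ _ (isRect_commonObjs h.1.1) subset_rfl h.1.subset_commonObjs).2

theorem commonAttrs_commonObjs_commonAttrs {Z : Finset β} (hZ : Z ⊆ OO) :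
    commonAttrs Db AA (commonObjs Db OO (commonAttrs Db AA Z)) = commonAttrs Db AA Z :=
  (commonAttrs_anti (subset_commonObjs_commonAttrs hZ)).antisymm
    (subset_commonAttrs_commonObjs (commonAttrs_subset Z))

theorem isConcept_of_eq {X : Finset α} {Y : Finset β} (hX : X = commonAttrs Db AA Y)
    (hY : Y = commonObjs Db OO X) : IsConcept Db AA OO X Y := by
  have hXA : X ⊆ AA := hX ▸ commonAttrs_subset Y
  refine ⟨hY ▸ isRect_commonObjs hXA, fun X' Y' h' hXX' hYY' => ?_⟩
  have hX' : X = X' :=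
    hXX'.antisymm (hX ▸ h'.subset_commonAttrs.trans (commonAttrs_anti hYY'))
  subst hX'
  exact ⟨rfl, hYY'.antisymm (hY ▸ h'.subset_commonObjs)⟩

theorem isConcept_commonAttrs_commonObjs {Z : Finset β} (hZ : Z ⊆ OO) :
    IsConcept Db AA OO (commonAttrs Db AA Z) (commonObjs Db OO (commonAttrs Db AA Z)) :=
  isConcept_of_eq (commonAttrs_commonObjs_commonAttrs hZ).symm rfl

theorem IsConcept.subset_commonAttrs_of_subset {X : Finset α} {Y Z : Finset β}
    (h : IsConcept Db AA OO X Y) (hZ : Z ⊆ Y) : X ⊆ commonAttrs Db AA Z :=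
  h.eq_commonAttrs ▸ commonAttrs_anti hZ

theorem IsConcept.commonObjs_commonAttrs_subset {X : Finset α} {Y Z : Finset β}
    (h : IsConcept Db AA OO X Y) (hZ : Z ⊆ Y) :
    commonObjs Db OO (commonAttrs Db AA Z) ⊆ Y :=
  h.eq_commonObjs ▸ commonObjs_anti (h.subset_commonAttrs_of_subset hZ)

end Derivation

/-- Every `O`-equivalence class of formal concepts (`Y ∩ O = Y' ∩ O`) has a
greatest element for the order `(X,Y) ⪯ (X',Y') ↔ X ⊆ X' ∧ Y' ⊆ Y`. -/
theorem O_equiv_class_has_greatest (Db : α → β → Prop) (AA : Finset α) (OO : Finset β)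
    (O : Finset β) (X : Finset α) (Y : Finset β)
    (h : IsConcept Db AA OO X Y) :
    ∃ X₀ Y₀, IsConcept Db AA OO X₀ Y₀ ∧ Y₀ ∩ O = Y ∩ O ∧
      ∀ X' Y', IsConcept Db AA OO X' Y' → Y' ∩ O = Y ∩ O → X' ⊆ X₀ ∧ Y₀ ⊆ Y' := by
  have hZ : Y ∩ O ⊆ OO := Finset.inter_subset_left.trans h.1.2.1
  refine ⟨_, _, isConcept_commonAttrs_commonObjs hZ, ?_, ?_⟩
  · exact (Finset.inter_subset_inter_right
      (h.commonObjs_commonAttrs_subset Finset.inter_subset_left)).antisymm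
      (Finset.subset_inter (subset_commonObjs_commonAttrs hZ) Finset.inter_subset_right)
  · intro X' Y' h' hY'
    rw [← hY']
    exact ⟨h'.subset_commonAttrs_of_subset Finset.inter_subset_left,
      h'.commonObjs_commonAttrs_subset Finset.inter_subset_left⟩
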